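/- arXiv:1110.1133 — 5 statements merged into one kernel-verified Lean document; each statement's English description precedes it below -/
import Mathlib

section
/- If an N×N unitary U satisfies |tr(U Uᵀ)| ≥ N(1−δ), then there exists a real orthogonal N×N matrix V such that D(U, V) ≤ √δ. -/
open Matrix

/-- Frobenius (Hilbert–Schmidt) norm `‖A‖ = √tr(A†A)`. -/
noncomputable def fnorm {ι : Type*} [Fintype ι] (A : Matrix ι ι ℂ) : ℝ :=
  Real.sqrt (Matrix.trace (Aᴴ * A)).re

/-- Phase-optimized normalized Frobenius distance
`D(A,B) = min_{θ∈[0,2π)} (1/√(2N)) ‖e^{iθ}A − B‖`. -/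
noncomputable def uDist {ι : Type*} [Fintype ι] (A B : Matrix ι ι ℂ) : ℝ :=
  sInf ((fun θ : ℝ => (Real.sqrt (2 * Fintype.card ι))⁻¹ *
    fnorm (Complex.exp (θ * Complex.I) • A - B)) '' Set.Ico 0 (2 * Real.pi))

/-!
After multiplying `U` by a phase we may assume `tr(UᵀU) = |tr(UUᵀ)| =: τ`. Let `M = Re U`. Real
vectors are not stretched by `U`, hence not by `M`, so the eigenvalues of `MᵀM` lie in `[0, 1]`;
and `(Re u)² = (|u|² + Re u²) / 2` entrywise gives `tr(MᵀM) = (N + τ) / 2`. The polar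
decomposition provides a real orthogonal `V` with `tr(VᵀM) = tr √(MᵀM) ≥ tr(MᵀM)`. Hence
`|tr(V*U)| ≥ Re tr(VᵀU) = tr(VᵀM) ≥ (N + τ) / 2 ≥ N(1 - δ)`, while
`‖e^{iθ}U - V‖² = 2N - 2|tr(V*U)|` for the best phase `θ`.
-/

open Complex

theorem Complex.exp_neg_arg_mul_I_mul (c : ℂ) : exp (↑(-c.arg) * I) * c = ‖c‖ := by
  nth_rewrite 2 [← norm_mul_exp_arg_mul_I c]
  rw [mul_left_comm, ← exp_add, ofReal_neg, neg_mul, neg_add_cancel, exp_zero, mul_one]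

theorem Complex.exp_ofReal_mul_I_mem_unitary (x : ℝ) : exp (x * I) ∈ unitary ℂ := by
  rw [Unitary.mem_iff_star_mul_self, RCLike.star_def, conj_mul', norm_exp_ofReal_mul_I]
  simp

namespace Matrix

section Real

variable {n : Type*} [Fintype n] [DecidableEq n]

theorem exists_mem_orthogonalGroup_eq_mul_diagonal_sqrt (A : Matrix n n ℝ) (μ : n → ℝ)
    (h : Aᵀ * A = diagonal μ) :
    ∃ Y ∈ orthogonalGroup n ℝ, A = Y * diagonal (fun i => √(μ i)) := by
  set col : n → EuclideanSpace ℝ n := fun j => WithLp.toLp 2 (Aᵀ j)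
  have hcol : ∀ i j, inner ℝ (col i) (col j) = diagonal μ i j := by
    intro i j
    rw [← h, EuclideanSpace.inner_toLp_toLp, mul_apply, dotProduct]
    simp [mul_comm]
  have hμ : ∀ i, 0 ≤ μ i := fun i => by
    have := real_inner_self_nonneg (x := col i)
    rwa [hcol, diagonal_apply_eq] at this
  -- the columns with `μ i ≠ 0`, normalized, are orthonormal; extend them to an orthonormal basis
  have hv : Orthonormal ℝ ({i | μ i ≠ 0}.domRestrict fun j => (√(μ j))⁻¹ • col j) := by
    rw [orthonormal_iff_ite]
    rintro ⟨i, hi⟩ ⟨j, hj⟩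
    simp only [Set.domRestrict_apply, inner_smul_left, inner_smul_right, hcol, diagonal_apply,
      Subtype.mk.injEq]
    split_ifs with hij
    · subst hij
      simp only [RCLike.conj_to_real]
      field_simp
      rw [Real.sq_sqrt (hμ i), div_self hi]
    · simp
  obtain ⟨b, hb⟩ := hv.exists_orthonormalBasis_extension_of_card_eq finrank_euclideanSpace
  have hcol_eq : ∀ j, col j = √(μ j) • b j := by
    intro j
    by_cases hj : μ j = 0
    · rw [hj, Real.sqrt_zero, zero_smul, ← inner_self_eq_zero (𝕜 := ℝ), hcol, diagonal_apply_eq,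
        hj]
    · rw [hb j hj, smul_inv_smul₀ (Real.sqrt_ne_zero'.mpr (lt_of_le_of_ne (hμ j) (Ne.symm hj)))]
  refine ⟨(EuclideanSpace.basisFun n ℝ).toBasis.toMatrix b,
    (EuclideanSpace.basisFun n ℝ).toMatrix_orthonormalBasis_mem_orthogonal b, ?_⟩
  ext r j
  rw [mul_diagonal, Module.Basis.toMatrix_apply]
  simpa [col, mul_comm] using congrArg (· r) (hcol_eq j)

theorem IsHermitian.transpose_mul_eigenvectorUnitary {A : Matrix n n ℝ}
    (hA : (Aᵀ * A).IsHermitian) :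
    (A * (hA.eigenvectorUnitary : Matrix n n ℝ))ᵀ * (A * (hA.eigenvectorUnitary : Matrix n n ℝ)) =
      diagonal hA.eigenvalues := by
  have := hA.conjStarAlgAut_star_eigenvectorUnitary
  rw [Unitary.conjStarAlgAut_star_apply, star_eq_conjTranspose,
    conjTranspose_eq_transpose_of_trivial] at this
  simpa [transpose_mul, ← mul_assoc] using this

theorem exists_mem_orthogonalGroup_trace_transpose_mul_eq {A : Matrix n n ℝ}
    (hA : (Aᵀ * A).IsHermitian) :
    ∃ V ∈ orthogonalGroup n ℝ, trace (Vᵀ * A) = ∑ i, √(hA.eigenvalues i) := by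
  set P : Matrix n n ℝ := ↑hA.eigenvectorUnitary
  obtain ⟨Y, hY, hAP⟩ :=
    exists_mem_orthogonalGroup_eq_mul_diagonal_sqrt _ _ hA.transpose_mul_eigenvectorUnitary
  have hP : Pᵀ ∈ orthogonalGroup n ℝ := by
    rw [mem_orthogonalGroup_iff', transpose_transpose, ← mem_orthogonalGroup_iff]
    exact hA.eigenvectorUnitary.2
  refine ⟨Y * Pᵀ, mul_mem hY hP, ?_⟩
  calc trace ((Y * Pᵀ)ᵀ * A) = trace (Yᵀ * (A * P)) := by
        rw [transpose_mul, transpose_transpose, mul_assoc, trace_mul_comm, mul_assoc]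
    _ = ∑ i, √(hA.eigenvalues i) := by
        rw [hAP, ← mul_assoc, (mem_orthogonalGroup_iff' n ℝ).mp hY, one_mul, trace_diagonal]

theorem exists_mem_orthogonalGroup_trace_transpose_mul_self_le (A : Matrix n n ℝ)
    (hA : ∀ x, (A *ᵥ x) ⬝ᵥ (A *ᵥ x) ≤ x ⬝ᵥ x) :
    ∃ V ∈ orthogonalGroup n ℝ, trace (Aᵀ * A) ≤ trace (Vᵀ * A) := by
  have hH : (Aᵀ * A).IsHermitian := by
    simpa [conjTranspose_eq_transpose_of_trivial] using isHermitian_conjTranspose_mul_self A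
  obtain ⟨V, hV, hVA⟩ := exists_mem_orthogonalGroup_trace_transpose_mul_eq hH
  refine ⟨V, hV, ?_⟩
  have hle : ∀ i, hH.eigenvalues i ≤ 1 := by
    intro i
    set e := hH.eigenvectorBasis i
    have he : e.ofLp ⬝ᵥ e.ofLp = 1 := by
      have h := real_inner_self_eq_norm_sq e
      rw [hH.eigenvectorBasis.orthonormal.1 i, one_pow] at h
      exact h
    calc hH.eigenvalues i = (A *ᵥ e.ofLp) ⬝ᵥ (A *ᵥ e.ofLp) := by
          rw [hH.eigenvalues_eq, ← mulVec_mulVec, dotProduct_mulVec, vecMul_transpose]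
          simp [e]
      _ ≤ 1 := he ▸ hA _
  rw [hVA, hH.trace_eq_sum_eigenvalues]
  refine Finset.sum_le_sum fun i _ => ?_
  simpa using hle i

end Real

section Complex

variable {ι : Type*}

theorem conjTranspose_map_ofReal (W : Matrix ι ι ℝ) : (W.map ofReal)ᴴ = (W.map ofReal)ᵀ := by
  ext i j
  simp

variable [Fintype ι]

theorem trace_transpose_mul_self_map_re (A : Matrix ι ι ℂ) :
    trace ((A.map re)ᵀ * A.map re) = ((trace (Aᴴ * A)).re + (trace (Aᵀ * A)).re) / 2 := by
  simp only [trace, diag, mul_apply, transpose_apply, conjTranspose_apply, map_apply, re_sum,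
    ← Finset.sum_add_distrib, Finset.sum_div]
  refine Finset.sum_congr rfl fun j _ => Finset.sum_congr rfl fun i _ => ?_
  simp [Complex.mul_re]

theorem re_trace_transpose_map_ofReal_mul (W : Matrix ι ι ℝ) (A : Matrix ι ι ℂ) :
    (trace ((W.map ofReal)ᵀ * A)).re = trace (Wᵀ * A.map re) := by
  simp [trace, mul_apply, re_sum]

theorem exists_mem_unitary_trace_transpose_mul_self_smul_eq_norm (A : Matrix ι ι ℂ) :
    ∃ z ∈ unitary ℂ, trace ((z • A)ᵀ * (z • A)) = ‖trace (Aᵀ * A)‖ := by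
  refine ⟨exp (↑(-((trace (Aᵀ * A)).arg / 2)) * I), exp_ofReal_mul_I_mem_unitary _, ?_⟩
  rw [transpose_smul, Matrix.smul_mul, Matrix.mul_smul, smul_smul, trace_smul, smul_eq_mul,
    ← exp_add, ← exp_neg_arg_mul_I_mul (trace (Aᵀ * A))]
  push_cast
  ring_nf

variable [DecidableEq ι]

theorem transpose_map_ofReal_mul_self {W : Matrix ι ι ℝ} (hW : W ∈ orthogonalGroup ι ℝ) :
    (W.map ofReal)ᵀ * W.map ofReal = 1 := by
  change Wᵀ.map ofRealHom * W.map ofRealHom = 1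
  rw [← Matrix.map_mul, (mem_orthogonalGroup_iff' ι ℝ).mp hW]
  exact Matrix.map_one _ ofReal_zero ofReal_one

theorem map_ofReal_mem_unitaryGroup {W : Matrix ι ι ℝ} (hW : W ∈ orthogonalGroup ι ℝ) :
    W.map ofReal ∈ unitaryGroup ι ℂ := by
  rw [mem_unitaryGroup_iff', star_eq_conjTranspose, conjTranspose_map_ofReal,
    transpose_map_ofReal_mul_self hW]

theorem map_re_mulVec_dotProduct_le {U : Matrix ι ι ℂ} (hU : U ∈ unitaryGroup ι ℂ)
    (x : ι → ℝ) : (U.map re *ᵥ x) ⬝ᵥ (U.map re *ᵥ x) ≤ x ⬝ᵥ x := by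
  set y := U *ᵥ fun j => (x j : ℂ)
  have hre : U.map re *ᵥ x = fun i => (y i).re := by
    ext i
    simp [y, mulVec, dotProduct, re_sum]
  have hy : star y ⬝ᵥ y = ((x ⬝ᵥ x : ℝ) : ℂ) := by
    have hUU : Uᴴ * U = 1 := (mem_unitaryGroup_iff').mp hU
    rw [star_mulVec, dotProduct_mulVec, vecMul_vecMul, hUU, vecMul_one]
    simp [dotProduct]
  calc (U.map re *ᵥ x) ⬝ᵥ (U.map re *ᵥ x) = ∑ i, (y i).re * (y i).re := by rw [hre]; rfl
    _ ≤ ∑ i, normSq (y i) := Finset.sum_le_sum fun i _ => by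
        rw [normSq_apply]; nlinarith [mul_self_nonneg (y i).im]
    _ = (star y ⬝ᵥ y).re := by simp [dotProduct, re_sum, normSq_apply]
    _ = x ⬝ᵥ x := by rw [hy, ofReal_re]

theorem exists_mem_orthogonalGroup_le_re_trace {U : Matrix ι ι ℂ}
    (hU : U ∈ unitaryGroup ι ℂ) :
    ∃ W ∈ orthogonalGroup ι ℝ,
      (Fintype.card ι + (trace (Uᵀ * U)).re) / 2 ≤ (trace ((W.map ofReal)ᵀ * U)).re := by
  obtain ⟨W, hW, hUW⟩ :=
    exists_mem_orthogonalGroup_trace_transpose_mul_self_le _ (map_re_mulVec_dotProduct_le hU)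
  refine ⟨W, hW, ?_⟩
  have hUU : Uᴴ * U = 1 := (mem_unitaryGroup_iff').mp hU
  rw [re_trace_transpose_map_ofReal_mul, ← natCast_re (Fintype.card ι), ← trace_one, ← hUU,
    ← trace_transpose_mul_self_map_re]
  exact hUW

theorem re_trace_conjTranspose_mul_self_smul_sub {U V : Matrix ι ι ℂ}
    (hU : U ∈ unitaryGroup ι ℂ) (hV : V ∈ unitaryGroup ι ℂ) {w : ℂ} (hw : w ∈ unitary ℂ) :
    (trace ((w • U - V)ᴴ * (w • U - V))).re =
      2 * Fintype.card ι - 2 * (w * trace (Vᴴ * U)).re := by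
  have hUV : trace (Uᴴ * V) = star (trace (Vᴴ * U)) := by
    rw [← trace_conjTranspose, conjTranspose_mul, conjTranspose_conjTranspose]
  have hexpand : (w • U - V)ᴴ * (w • U - V) =
      (star w * w) • (Uᴴ * U) - star w • (Uᴴ * V) - w • (Vᴴ * U) + Vᴴ * V := by
    rw [conjTranspose_sub, conjTranspose_smul]
    simp only [sub_mul, mul_sub, Matrix.smul_mul, Matrix.mul_smul, smul_smul, mul_comm w]
    abel
  have hUU : Uᴴ * U = 1 := (mem_unitaryGroup_iff').mp hU
  have hVV : Vᴴ * V = 1 := (mem_unitaryGroup_iff').mp hV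
  rw [hexpand, Unitary.star_mul_self_of_mem hw, one_smul, hUU, hVV,
    trace_add, trace_sub, trace_sub, trace_smul, trace_smul, hUV, trace_one]
  simp only [RCLike.star_def, smul_eq_mul, add_re, sub_re, natCast_re, mul_re, conj_re, conj_im]
  ring

end Complex

end Matrix

section uDist

variable {ι : Type*} [Fintype ι]

theorem uDist_le_fnorm_exp_smul_sub (A B : Matrix ι ι ℂ) (x : ℝ) :
    uDist A B ≤ (√(2 * Fintype.card ι))⁻¹ * fnorm (exp (x * I) • A - B) := by
  have hper : Function.Periodic (fun x : ℝ => exp (x * I)) (2 * Real.pi) := fun x => by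
    simpa using exp_mul_I_periodic (x : ℂ)
  obtain ⟨θ, hθ, hθx⟩ := hper.exists_mem_Ico₀ Real.two_pi_pos x
  rw [show exp (x * I) = exp (θ * I) from hθx]
  refine csInf_le ⟨0, ?_⟩ ⟨θ, hθ, rfl⟩
  rintro _ ⟨_, _, rfl⟩
  exact mul_nonneg (by positivity) (Real.sqrt_nonneg _)

theorem uDist_le_sqrt [DecidableEq ι] {U V : Matrix ι ι ℂ} (hU : U ∈ unitaryGroup ι ℂ)
    (hV : V ∈ unitaryGroup ι ℂ) :
    uDist U V ≤ √((Fintype.card ι - ‖trace (Vᴴ * U)‖) / Fintype.card ι) := by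
  set c := trace (Vᴴ * U)
  set k := Fintype.card ι
  calc uDist U V ≤ (√(2 * k))⁻¹ * fnorm (exp (↑(-c.arg) * I) • U - V) :=
        uDist_le_fnorm_exp_smul_sub U V _
    _ = √((k - ‖c‖) / k) := by
        rw [fnorm, re_trace_conjTranspose_mul_self_smul_sub hU hV (exp_ofReal_mul_I_mem_unitary _),
          exp_neg_arg_mul_I_mul, ofReal_re, inv_mul_eq_div, ← Real.sqrt_div' _ (by positivity),
          ← mul_sub, mul_div_mul_left _ _ two_ne_zero]

end uDist

theorem close_to_orthogonal_general {N : ℕ} {δ : ℝ}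
    (hδ0 : 0 ≤ δ)
    (U : Matrix (Fin N) (Fin N) ℂ)
    (hU : U ∈ Matrix.unitaryGroup (Fin N) ℂ)
    (htr : (N : ℝ) * (1 - δ) ≤ ‖Matrix.trace (U * Uᵀ)‖) :
    ∃ V : Matrix (Fin N) (Fin N) ℂ,
      (∀ i j, (V i j).im = 0) ∧ Vᵀ * V = 1 ∧ V * Vᵀ = 1 ∧
      uDist U V ≤ Real.sqrt δ := by
  obtain ⟨z, hz, hzt⟩ := exists_mem_unitary_trace_transpose_mul_self_smul_eq_norm U
  obtain ⟨W, hW, hWU⟩ := exists_mem_orthogonalGroup_le_re_trace (Unitary.smul_mem_of_mem hz hU)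
  rw [hzt, ofReal_re, Fintype.card_fin, trace_mul_comm Uᵀ] at hWU
  set V := W.map ofReal
  have hVU : (N + ‖trace (U * Uᵀ)‖) / 2 ≤ ‖trace (Vᴴ * U)‖ := calc
    (N + ‖trace (U * Uᵀ)‖) / 2 ≤ (trace (Vᵀ * (z • U))).re := hWU
    _ ≤ ‖trace (Vᵀ * (z • U))‖ := re_le_norm _
    _ = ‖trace (Vᴴ * U)‖ := by
      rw [Matrix.mul_smul, trace_smul, smul_eq_mul, norm_mul, CStarRing.norm_of_mem_unitary hz,
        one_mul, conjTranspose_map_ofReal]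
  refine ⟨V, fun i j => ofReal_im _, transpose_map_ofReal_mul_self hW,
    mul_eq_one_comm.mp (transpose_map_ofReal_mul_self hW),
    (uDist_le_sqrt hU (map_ofReal_mem_unitaryGroup hW)).trans (Real.sqrt_le_sqrt ?_)⟩
  rw [Fintype.card_fin]
  refine div_le_of_le_mul₀ (Nat.cast_nonneg N) hδ0 ?_
  nlinarith [mul_nonneg (Nat.cast_nonneg (α := ℝ) N) hδ0]

/-- If |tr(UUᵀ)| ≥ N(1−δ) then U is √δ-close to a real orthogonal V. -/
theorem close_to_orthogonal {N : ℕ} {δ : ℝ}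
    (hδ0 : 0 ≤ δ) (hδ1 : δ ≤ 1)
    (U : Matrix (Fin N) (Fin N) ℂ)
    (hU : U ∈ Matrix.unitaryGroup (Fin N) ℂ)
    (htr : (N : ℝ) * (1 - δ) ≤ ‖Matrix.trace (U * Uᵀ)‖) :
    ∃ V : Matrix (Fin N) (Fin N) ℂ,
      (∀ i j, (V i j).im = 0) ∧ Vᵀ * V = 1 ∧ V * Vᵀ = 1 ∧
      uDist U V ≤ Real.sqrt δ :=
  close_to_orthogonal_general hδ0 U hU htr
end

section
/- For any N×N unitary U with |tr(U Uᵀ)| ≥ N(1−δ), the matrix A = (U + U*)/2 (U* the entrywise complex conjugate) satisfies A†A ≤ I, ‖A‖² ≥ N(1 − δ/2), and ‖U − A‖² ≤ Nδ/2. -/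
open Matrix
open scoped ComplexOrder

/-- For unitary U with tr(UUᵀ) real nonnegative and ≥ N(1−δ),
the matrix A = (U + U*)/2 satisfies A†A ≤ I, ‖A‖² ≥ N(1−δ/2) and ‖U−A‖² ≤ Nδ/2. -/
theorem real_part_properties {N : ℕ} {δ : ℝ}
    (hδ0 : 0 ≤ δ) (hδ1 : δ ≤ 1)
    (U : Matrix (Fin N) (Fin N) ℂ)
    (hU : U ∈ Matrix.unitaryGroup (Fin N) ℂ)
    (him : (Matrix.trace (U * Uᵀ)).im = 0)
    (hre : 0 ≤ (Matrix.trace (U * Uᵀ)).re)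
    (htr : (N : ℝ) * (1 - δ) ≤ (Matrix.trace (U * Uᵀ)).re) :
    Matrix.PosSemidef
        (1 - ((2:ℂ)⁻¹ • (U + U.map (starRingEnd ℂ)))ᴴ *
             ((2:ℂ)⁻¹ • (U + U.map (starRingEnd ℂ)))) ∧
      (N : ℝ) * (1 - δ / 2) ≤ fnorm ((2:ℂ)⁻¹ • (U + U.map (starRingEnd ℂ))) ^ 2 ∧
      fnorm (U - (2:ℂ)⁻¹ • (U + U.map (starRingEnd ℂ))) ^ 2 ≤ (N : ℝ) * δ / 2 := by
  set V := U.map (starRingEnd ℂ) with hV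
  set A := (2:ℂ)⁻¹ • (U + V) with hA
  set t := Matrix.trace (U * Uᵀ) with ht0
  have h1 : Uᴴ * U = 1 := by rw [← Matrix.star_eq_conjTranspose]; exact hU.1
  have h1' : U * Uᴴ = 1 := by rw [← Matrix.star_eq_conjTranspose]; exact hU.2
  have hVH : Vᴴ = Uᵀ := by
    ext i j; simp [hV, Matrix.conjTranspose_apply, Matrix.map_apply]
  have hHm : Uᴴ.map (starRingEnd ℂ) = Uᵀ := by
    ext i j; simp [Matrix.conjTranspose_apply, Matrix.map_apply]
  have hUHm : Uᵀ.map (starRingEnd ℂ) = Uᴴ := by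
    ext i j; simp [Matrix.conjTranspose_apply, Matrix.map_apply]
  have hone : (1 : Matrix (Fin N) (Fin N) ℂ).map (starRingEnd ℂ) = 1 :=
    Matrix.map_one _ (map_zero _) (map_one _)
  have h2 : Uᵀ * V = 1 := by
    have := congrArg (fun M => M.map (starRingEnd ℂ)) h1
    simpa only [Matrix.map_mul, hHm, hone] using this
  have hBB : (Uᵀ * U) * (Uᴴ * V) = 1 := by
    rw [Matrix.mul_assoc, ← Matrix.mul_assoc U, h1', Matrix.one_mul, h2]
  have trace_map : ∀ M : Matrix (Fin N) (Fin N) ℂ,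
      Matrix.trace (M.map (starRingEnd ℂ)) = star (Matrix.trace M) := by
    intro M
    simp [Matrix.trace, Matrix.diag, Matrix.map_apply, map_sum]
  have htB : Matrix.trace (Uᴴ * V) = star t := by
    rw [Matrix.trace_mul_comm, ht0, ← trace_map, Matrix.map_mul, hUHm]
  have hstar2 : star ((2:ℂ)⁻¹) = (2:ℂ)⁻¹ := by simp
  have e1 : Aᴴ = (2:ℂ)⁻¹ • (Uᴴ + Uᵀ) := by
    rw [hA, Matrix.conjTranspose_smul, Matrix.conjTranspose_add, hVH, hstar2]
  have e2 : Aᴴ * A = (4:ℂ)⁻¹ •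
      ((1 : Matrix (Fin N) (Fin N) ℂ) + Uᴴ * V + (Uᵀ * U + 1)) := by
    rw [e1, hA, smul_mul_assoc, mul_smul_comm, smul_smul,
      Matrix.add_mul, Matrix.mul_add, Matrix.mul_add, h1, h2]
    module
  have ht : t = ((t.re : ℝ) : ℂ) := Complex.ext rfl (by simpa using him)
  -- PSD part
  have hkey : (1 : Matrix (Fin N) (Fin N) ℂ) - Aᴴ * A =
      ((2:ℂ)⁻¹ • ((1 : Matrix (Fin N) (Fin N) ℂ) - Uᴴ * V))ᴴ *
      ((2:ℂ)⁻¹ • ((1 : Matrix (Fin N) (Fin N) ℂ) - Uᴴ * V)) := by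
    have rhs : ((2:ℂ)⁻¹ • ((1 : Matrix (Fin N) (Fin N) ℂ) - Uᴴ * V))ᴴ *
        ((2:ℂ)⁻¹ • ((1 : Matrix (Fin N) (Fin N) ℂ) - Uᴴ * V)) =
        (4:ℂ)⁻¹ • ((1 : Matrix (Fin N) (Fin N) ℂ) - Uᴴ * V - (Uᵀ * U - 1)) := by
      rw [Matrix.conjTranspose_smul, Matrix.conjTranspose_sub, Matrix.conjTranspose_one,
        Matrix.conjTranspose_mul, hVH, Matrix.conjTranspose_conjTranspose, hstar2,
        smul_mul_assoc, mul_smul_comm, smul_smul,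
        Matrix.sub_mul, Matrix.mul_sub, Matrix.mul_sub, Matrix.one_mul, Matrix.one_mul,
        Matrix.mul_one, hBB]
      module
    rw [rhs, e2]
    module
  refine ⟨hkey ▸ Matrix.posSemidef_conjTranspose_mul_self _, ?_, ?_⟩
  · -- norm of A
    have htrA : Matrix.trace (Aᴴ * A) = ((((N:ℝ) + t.re)/2 : ℝ) : ℂ) := by
      rw [e2, Matrix.trace_smul, Matrix.trace_add, Matrix.trace_add, Matrix.trace_add,
        Matrix.trace_one, htB, Matrix.trace_mul_comm Uᵀ U, ← ht0, ht,
        Complex.star_def, Complex.conj_ofReal]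
      push_cast
      simp [smul_eq_mul]
      ring
    have : fnorm A ^ 2 = ((N:ℝ) + t.re)/2 := by
      rw [fnorm, htrA, Complex.ofReal_re, Real.sq_sqrt (by positivity)]
    rw [this]
    nlinarith [htr]
  · -- norm of U - A
    have hW : U - A = (2:ℂ)⁻¹ • (U - V) := by rw [hA]; module
    have e3 : (U - A)ᴴ * (U - A) = (4:ℂ)⁻¹ •
        ((1 : Matrix (Fin N) (Fin N) ℂ) - Uᴴ * V - (Uᵀ * U - 1)) := by
      rw [hW, Matrix.conjTranspose_smul, Matrix.conjTranspose_sub, hVH, hstar2,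
        smul_mul_assoc, mul_smul_comm, smul_smul,
        Matrix.sub_mul, Matrix.mul_sub, Matrix.mul_sub, h1, h2]
      module
    have htrW : Matrix.trace ((U - A)ᴴ * (U - A)) = ((((N:ℝ) - t.re)/2 : ℝ) : ℂ) := by
      rw [e3, Matrix.trace_smul, Matrix.trace_sub, Matrix.trace_sub, Matrix.trace_sub,
        Matrix.trace_one, htB, Matrix.trace_mul_comm Uᵀ U, ← ht0, ht,
        Complex.star_def, Complex.conj_ofReal]
      push_cast
      simp [smul_eq_mul]
      ring
    rcases le_or_gt 0 (((N:ℝ) - t.re)/2) with hx | hx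
    · have : fnorm (U - A) ^ 2 = ((N:ℝ) - t.re)/2 := by
        rw [fnorm, htrW, Complex.ofReal_re, Real.sq_sqrt hx]
      rw [this]
      nlinarith [htr]
    · have : fnorm (U - A) = 0 := by
        rw [fnorm, htrW, Complex.ofReal_re]
        exact Real.sqrt_eq_zero_of_nonpos hx.le
      rw [this]
      have hN : (0:ℝ) ≤ (N:ℝ) := Nat.cast_nonneg N
      nlinarith
end

section
/- (Sampling lemma for junta testing) Let p be a probability distribution on Z₄ⁿ such that for every T ⊆ [n] with |T| ≤ k, Pr_{x∼p}[supp(x) ⊆ T] ≤ 1−δ. If x₁,…,x_m are i.i.d. samples from p, then Pr[|∪_{j=1}^m supp(x_j)| ≤ k] ≤ C(m,k)·(1−δ)^{m−k}, where C(m,k) is the binomial coefficient. -/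
/-!
If the union `U` of the supports of `x₁, …, x_m` has at most `k` elements, then some `k` of the
samples already cover `U`: pick one sample through each point of `U` and pad to `k` indices.
Fix such a set `J` of indices. Conditionally on the samples indexed by `J`, each of the other
`m - k` samples must have its support inside the set of size at most `k` covered by `J`, an event
of probability at most `1 - δ`; by independence this costs `(1 - δ) ^ (m - k)`, and a union bound
over the `C(m, k)` choices of `J` gives the claim.
-/

open Matrix

/-- Support of a string in Z₄ⁿ. -/
def psupp {n : ℕ} (x : Fin n → Fin 4) : Finset (Fin n) :=
  Finset.univ.filter (fun i => x i ≠ 0)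

open Finset

namespace Finset

variable {ι α : Type*} [DecidableEq α]

theorem sum_biUnion_le_sum_sum {M : Type*} [AddCommMonoid M] [PartialOrder M]
    [IsOrderedAddMonoid M] (s : Finset ι) (t : ι → Finset α) {f : α → M}
    (hf : ∀ x ∈ s.biUnion t, 0 ≤ f x) :
    ∑ x ∈ s.biUnion t, f x ≤ ∑ i ∈ s, ∑ x ∈ t i, f x := by
  have hst : s.biUnion t = (s.sigma t).image Sigma.snd := by ext; simp
  rw [hst] at hf ⊢
  exact (sum_image_le_of_nonneg hf).trans_eq (sum_sigma s t fun x => f x.2)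

variable [DecidableEq ι]

theorem exists_subset_card_le_biUnion_eq (s : Finset ι) (f : ι → Finset α) :
    ∃ t ⊆ s, #t ≤ #(s.biUnion f) ∧ t.biUnion f = s.biUnion f := by
  choose g hgs hgf using fun b (hb : b ∈ s.biUnion f) => mem_biUnion.1 hb
  have hts : (s.biUnion f).attach.image (fun b => g b.1 b.2) ⊆ s :=
    image_subset_iff.2 fun b _ => hgs b.1 b.2
  refine ⟨_, hts, card_image_le.trans card_attach.le, ?_⟩
  refine (biUnion_subset_biUnion_of_subset_left f hts).antisymm fun b hb => ?_
  exact mem_biUnion.2 ⟨g b hb, mem_image.2 ⟨⟨b, hb⟩, mem_attach _ _, rfl⟩, hgf b hb⟩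

theorem exists_card_eq_biUnion_eq [Fintype ι] {k : ℕ} (f : ι → Finset α)
    (hf : #(univ.biUnion f) ≤ k) (hk : k ≤ Fintype.card ι) :
    ∃ J : Finset ι, #J = k ∧ J.biUnion f = univ.biUnion f := by
  obtain ⟨t, -, htcard, ht⟩ := exists_subset_card_le_biUnion_eq univ f
  obtain ⟨J, htJ, hJ⟩ := exists_superset_card_eq (htcard.trans hf) hk
  refine ⟨J, hJ, (biUnion_subset_biUnion_of_subset_left f (subset_univ J)).antisymm ?_⟩
  exact ht ▸ biUnion_subset_biUnion_of_subset_left f htJ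

end Finset

section IndependentSamples

variable {ι α : Type*} [Fintype ι] [DecidableEq ι] [Fintype α] {p : α → ℝ}

theorem sum_pi_prod_eq_one (κ : Type*) [Fintype κ] [DecidableEq κ] (hsum : ∑ x, p x = 1) :
    ∑ y : κ → α, ∏ j, p (y j) = 1 := by
  rw [← Fintype.piFinset_univ, sum_prod_piFinset, hsum, prod_const_one]

theorem sum_prod_filter_forall_compl_mem_le_pow [DecidableEq α] (hp : ∀ x, 0 ≤ p x)
    (hsum : ∑ x, p x = 1) (J : Finset ι) (P : (J → α) → Prop) [DecidablePred P]
    (B : (J → α) → Finset α) {c : ℝ} (hc : 0 ≤ c) (hB : ∀ y, P y → ∑ x ∈ B y, p x ≤ c) :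
    ∑ xs ∈ univ.filter (fun xs : ι → α =>
        P (fun j : J => xs j) ∧ ∀ i : {i // i ∉ J}, xs i ∈ B fun j : J => xs j),
      ∏ i, p (xs i) ≤ c ^ (Fintype.card ι - #J) := by
  have hcard : Fintype.card {i // i ∉ J} = Fintype.card ι - #J := by
    rw [Fintype.card_subtype_compl, Fintype.card_coe]
  simp only [sum_filter, ← Fintype.prod_subtype_mul_prod_subtype (· ∈ J)]
  calc _ = ∑ y : J → α, ∑ z : {i // i ∉ J} → α,
        if P y ∧ ∀ i, z i ∈ B y then (∏ j, p (y j)) * ∏ i, p (z i) else 0 := by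
        -- `↥J` carries both `Finset.Subtype.fintype` and `Subtype.fintype` here, hence `convert`.
        convert ((Equiv.piEquivPiSubtypeProd (· ∈ J) fun _ => α).sum_comp fun w =>
          if P w.1 ∧ ∀ i, w.2 i ∈ B w.1 then (∏ j, p (w.1 j)) * ∏ i, p (w.2 i) else 0).trans
          (Fintype.sum_prod_type _) using 2
        congr!
    _ ≤ ∑ y : J → α, (∏ j, p (y j)) * c ^ (Fintype.card ι - #J) := by
        refine sum_le_sum fun y _ => ?_
        have hpy : 0 ≤ ∏ j, p (y j) := prod_nonneg fun j _ => hp (y j)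
        by_cases hy : P y
        · simp only [hy, true_and, ← Fintype.mem_piFinset, sum_ite_mem, univ_inter, ← mul_sum,
            sum_prod_piFinset, prod_const, card_univ, hcard]
          gcongr
          · exact sum_nonneg fun x _ => hp x
          · exact hB y hy
        · simp only [hy, false_and, if_false, sum_const_zero]
          exact mul_nonneg hpy (pow_nonneg hc _)
    _ = c ^ (Fintype.card ι - #J) := by rw [← sum_mul, sum_pi_prod_eq_one _ hsum, one_mul]

theorem sum_prod_filter_card_biUnion_le {β : Type*} [DecidableEq α] [DecidableEq β]
    {σ : α → Finset β} {k : ℕ} {q : ℝ} (hp : ∀ x, 0 ≤ p x) (hsum : ∑ x, p x = 1)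
    (hT : ∀ T : Finset β, #T ≤ k → ∑ x ∈ univ.filter (fun x => σ x ⊆ T), p x ≤ q)
    (hk : k ≤ Fintype.card ι) :
    ∑ xs ∈ univ.filter (fun xs : ι → α => #(univ.biUnion fun j => σ (xs j)) ≤ k),
      ∏ j, p (xs j) ≤ (Fintype.card ι).choose k * q ^ (Fintype.card ι - k) := by
  have hq : 0 ≤ q := (sum_nonneg fun x _ => hp x).trans (hT ∅ (by simp))
  have hw : ∀ xs : ι → α, 0 ≤ ∏ j, p (xs j) := fun xs => prod_nonneg fun j _ => hp (xs j)
  let coveredBy (J : Finset ι) : Finset (ι → α) := univ.filter fun xs =>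
    #(univ.biUnion fun j : J => σ (xs j)) ≤ k ∧
      ∀ i : {i // i ∉ J}, xs i ∈ univ.filter fun x => σ x ⊆ univ.biUnion fun j : J => σ (xs j)
  have hcover : univ.filter (fun xs : ι → α => #(univ.biUnion fun j => σ (xs j)) ≤ k) ⊆
      (powersetCard k univ).biUnion coveredBy := by
    intro xs hxs
    obtain ⟨J, hJk, hJ⟩ := exists_card_eq_biUnion_eq (fun j => σ (xs j)) (mem_filter.1 hxs).2 hk
    have hJU : (univ.biUnion fun j : J => σ (xs j)) = univ.biUnion fun j => σ (xs j) := by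
      rw [univ_eq_attach, attach_biUnion (f := fun j => σ (xs j)), hJ]
    refine mem_biUnion.2 ⟨J, mem_powersetCard.2 ⟨subset_univ J, hJk⟩, ?_⟩
    simp only [coveredBy, mem_filter, mem_univ, true_and, hJU]
    exact ⟨(mem_filter.1 hxs).2, fun i => subset_biUnion_of_mem (fun j => σ (xs j)) (mem_univ i.1)⟩
  calc _ ≤ ∑ xs ∈ (powersetCard k univ).biUnion coveredBy, ∏ j, p (xs j) :=
        sum_le_sum_of_subset_of_nonneg hcover fun xs _ _ => hw xs
    _ ≤ ∑ J ∈ powersetCard k univ, ∑ xs ∈ coveredBy J, ∏ j, p (xs j) :=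
        sum_biUnion_le_sum_sum _ _ fun xs _ => hw xs
    _ ≤ ∑ J ∈ powersetCard k (univ : Finset ι), q ^ (Fintype.card ι - k) := by
        refine sum_le_sum fun J hJ => ?_
        rw [← (mem_powersetCard.1 hJ).2]
        exact sum_prod_filter_forall_compl_mem_le_pow hp hsum J
          (fun y => #(univ.biUnion fun j => σ (y j)) ≤ k)
          (fun y => univ.filter fun x => σ x ⊆ univ.biUnion fun j => σ (y j)) hq
          fun y hy => hT _ hy
    _ = (Fintype.card ι).choose k * q ^ (Fintype.card ι - k) := by
        rw [sum_const, card_powersetCard, card_univ, nsmul_eq_mul]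

end IndependentSamples

open scoped Classical in
theorem junta_sampling_lemma_general {n k m : ℕ} {δ : ℝ}
    (hkm : k ≤ m)
    (p : (Fin n → Fin 4) → ℝ)
    (hp : ∀ x, 0 ≤ p x) (hsum : ∑ x, p x = 1)
    (hT : ∀ T : Finset (Fin n), T.card ≤ k →
      ∑ x ∈ Finset.univ.filter (fun x => psupp x ⊆ T), p x ≤ 1 - δ) :
    ∑ xs ∈ Finset.univ.filter
        (fun xs : Fin m → Fin n → Fin 4 =>
          (Finset.univ.biUnion fun j => psupp (xs j)).card ≤ k),
      ∏ j, p (xs j) ≤ (m.choose k : ℝ) * (1 - δ) ^ (m - k) := by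
  simpa using sum_prod_filter_card_biUnion_le (ι := Fin m) hp hsum hT (by simpa using hkm)

open scoped Classical in
/-- If every set T of at most k coordinates captures at most 1−δ of the
probability mass of p, then m i.i.d. samples from p have union of supports of size ≤ k
with probability at most C(m,k)(1−δ)^{m−k}. -/
theorem junta_sampling_lemma {n k m : ℕ} {δ : ℝ}
    (hn : 0 < n) (hk : 0 < k) (hm : 0 < m) (hkm : k ≤ m)
    (hδ0 : 0 < δ) (hδ1 : δ ≤ 1)
    (p : (Fin n → Fin 4) → ℝ)
    (hp : ∀ x, 0 ≤ p x) (hsum : ∑ x, p x = 1)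
    (hT : ∀ T : Finset (Fin n), T.card ≤ k →
      ∑ x ∈ Finset.univ.filter (fun x => psupp x ⊆ T), p x ≤ 1 - δ) :
    ∑ xs ∈ Finset.univ.filter
        (fun xs : Fin m → Fin n → Fin 4 =>
          (Finset.univ.biUnion fun j => psupp (xs j)).card ≤ k),
      ∏ j, p (xs j) ≤ (m.choose k : ℝ) * (1 - δ) ^ (m - k) :=
  junta_sampling_lemma_general hkm p hp hsum hT
end

section
/- Let U be an N-dimensional unitary with N = 2ⁿ, and suppose at least a 2/3 fraction of x ∈ Z₄ⁿ satisfy D(Uσ_xU†, P_n) ≤ δ, where P_n is the n-qubit Pauli group. Then for every y ∈ Z₄ⁿ, D(Uσ_yU†, P_n) ≤ 2δ. -/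
open Matrix

/-- The 2×2 Pauli matrices `I, X, Y, Z`. -/
def sigma : Fin 4 → Matrix (Fin 2) (Fin 2) ℂ
  | 0 => 1
  | 1 => !![0, 1; 1, 0]
  | 2 => !![0, -Complex.I; Complex.I, 0]
  | 3 => !![1, 0; 0, -1]

/-- The `n`-qubit Pauli matrix `σ_x = σ_{x₁} ⊗ ⋯ ⊗ σ_{x_n}`. -/
def pauli {n : ℕ} (x : Fin n → Fin 4) :
    Matrix (Fin n → Fin 2) (Fin n → Fin 2) ℂ :=
  fun i j => ∏ k, sigma (x k) (i k) (j k)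

/-- Pauli coefficient `μ_x(A) = tr(σ_x A)/2ⁿ`. -/
noncomputable def pcoef {n : ℕ} (x : Fin n → Fin 4)
    (A : Matrix (Fin n → Fin 2) (Fin n → Fin 2) ℂ) : ℂ :=
  Matrix.trace (pauli x * A) / 2 ^ n

/-- Distance from a matrix to a set of matrices. -/
noncomputable def uDistSet {ι : Type*} [Fintype ι]
    (A : Matrix ι ι ℂ) (S : Set (Matrix ι ι ℂ)) : ℝ :=
  sInf (uDist A '' S)

/-- The n-qubit Pauli group P_n = {i^k σ_x : k ∈ Z₄, x ∈ Z₄ⁿ}. -/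
def PauliGroup (n : ℕ) : Set (Matrix (Fin n → Fin 2) (Fin n → Fin 2) ℂ) :=
  {P | ∃ k : Fin 4, ∃ x : Fin n → Fin 4, P = Complex.I ^ (k : ℕ) • pauli x}

/-!
The good set has density more than `1/2`, so it meets its translate `y ⊕ good`: there are good
`x, z` with `σ_z σ_x = i^m σ_y`. Conjugation by `U` is multiplicative and `P_n` is closed under
products, and for unitary `A₁, B₂` the splitting
`e^{i(θ₁+θ₂)} A₁A₂ - B₁B₂ = A₁ (e^{iθ₁} (e^{iθ₂} A₂ - B₂)) + (e^{iθ₁} A₁ - B₁) B₂`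
together with unitary invariance of the Frobenius norm makes the distance to `P_n` subadditive
along products. Hence `D(Uσ_yU†, P_n) ≤ D(Uσ_zU†, P_n) + D(Uσ_xU†, P_n) ≤ 2δ`.
-/

section PiKronecker

variable {ι m R : Type*} [Fintype ι]

def piKronecker [CommSemiring R] (M : ι → Matrix m m R) : Matrix (ι → m) (ι → m) R :=
  of fun i j => ∏ k, M k (i k) (j k)

lemma piKronecker_mul [DecidableEq ι] [Fintype m] [CommSemiring R] (M N : ι → Matrix m m R) :
    piKronecker M * piKronecker N = piKronecker fun k => M k * N k := by
  ext i j
  simp only [piKronecker, mul_apply, of_apply, ← Finset.prod_mul_distrib]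
  exact (Fintype.prod_sum fun k t => M k (i k) t * N k t (j k)).symm

lemma piKronecker_one [DecidableEq m] [CommSemiring R] :
    piKronecker (fun _ : ι => (1 : Matrix m m R)) = 1 := by
  ext i j
  simp only [piKronecker, of_apply, one_apply, Finset.prod_boole, Finset.mem_univ,
    forall_const, funext_iff]

lemma piKronecker_smul [CommSemiring R] (c : ι → R) (M : ι → Matrix m m R) :
    piKronecker (fun k => c k • M k) = (∏ k, c k) • piKronecker M := by
  ext i j
  simp [piKronecker, Finset.prod_mul_distrib]

lemma conjTranspose_piKronecker [CommSemiring R] [StarRing R] (M : ι → Matrix m m R) :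
    (piKronecker M)ᴴ = piKronecker fun k => (M k)ᴴ := by
  ext i j
  simp [piKronecker, conjTranspose_apply, star_prod]

lemma piKronecker_mem_unitaryGroup [DecidableEq ι] [Fintype m] [DecidableEq m] [CommRing R]
    [StarRing R] {M : ι → Matrix m m R} (hM : ∀ k, M k ∈ unitaryGroup m R) :
    piKronecker M ∈ unitaryGroup (ι → m) R := by
  rw [mem_unitaryGroup_iff, star_eq_conjTranspose, conjTranspose_piKronecker,
    piKronecker_mul, ← piKronecker_one]
  congr! 2 with k
  exact mem_unitaryGroup_iff.mp (hM k)

end PiKronecker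

lemma pauli_eq_piKronecker {n : ℕ} (x : Fin n → Fin 4) :
    pauli x = piKronecker fun k => sigma (x k) := rfl

/-- Exponent of the phase in `σ_a σ_b = i ^ sigmaPhase a b • σ_(a ^^^ b)`. -/
def sigmaPhase : Fin 4 → Fin 4 → ℕ :=
  ![![0, 0, 0, 0], ![0, 0, 1, 3], ![0, 3, 0, 1], ![0, 1, 3, 0]]

lemma fin4_xor_xor_cancel_left (a b : Fin 4) : a ^^^ (a ^^^ b) = b := by decide +revert

lemma fin4_xor_xor_cancel_right (a b : Fin 4) : a ^^^ b ^^^ b = a := by decide +revert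

lemma sigma_mul (a b : Fin 4) :
    sigma a * sigma b = Complex.I ^ sigmaPhase a b • sigma (a ^^^ b) := by
  fin_cases a <;> fin_cases b <;>
    · ext i j
      fin_cases i <;> fin_cases j <;>
        simp [sigma, sigmaPhase, mul_apply, Fin.sum_univ_two, one_apply, pow_succ]

lemma sigma_mem_unitaryGroup (a : Fin 4) : sigma a ∈ unitaryGroup (Fin 2) ℂ := by
  rw [mem_unitaryGroup_iff]
  fin_cases a <;>
    · ext i j
      fin_cases i <;> fin_cases j <;>
        simp [sigma, mul_apply, Fin.sum_univ_two, one_apply]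

lemma pauli_mul {n : ℕ} (x y : Fin n → Fin 4) :
    pauli x * pauli y =
      Complex.I ^ (∑ k, sigmaPhase (x k) (y k)) • pauli fun k => x k ^^^ y k := by
  simp only [pauli_eq_piKronecker, piKronecker_mul, sigma_mul, piKronecker_smul,
    Finset.prod_pow_eq_pow_sum]

lemma pauli_mem_unitaryGroup {n : ℕ} (x : Fin n → Fin 4) :
    pauli x ∈ unitaryGroup (Fin n → Fin 2) ℂ :=
  piKronecker_mem_unitaryGroup fun k => sigma_mem_unitaryGroup (x k)

section Distance

variable {κ : Type*} [Fintype κ]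

attribute [local instance] frobeniusNormedAddCommGroup frobeniusNormedSpace

lemma fnorm_eq_norm (A : Matrix κ κ ℂ) : fnorm A = ‖A‖ := by
  rw [frobenius_norm_def, fnorm, Real.sqrt_eq_rpow, one_div]
  congr 1
  simp only [trace, diag, mul_apply, conjTranspose_apply, Complex.re_sum]
  rw [Finset.sum_comm]
  simp [← Complex.normSq_eq_conj_mul_self, Complex.normSq_eq_norm_sq, -Complex.ofReal_pow]

lemma fnorm_add_le (A B : Matrix κ κ ℂ) : fnorm (A + B) ≤ fnorm A + fnorm B := by
  simpa only [fnorm_eq_norm] using norm_add_le A B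

lemma fnorm_smul (c : ℂ) (A : Matrix κ κ ℂ) : fnorm (c • A) = ‖c‖ * fnorm A := by
  simp only [fnorm_eq_norm, norm_smul]

noncomputable def phaseDist (θ : ℝ) (A B : Matrix κ κ ℂ) : ℝ :=
  (Real.sqrt (2 * Fintype.card κ))⁻¹ * fnorm (Complex.exp (θ * Complex.I) • A - B)

lemma phaseDist_nonneg (θ : ℝ) (A B : Matrix κ κ ℂ) : 0 ≤ phaseDist θ A B :=
  mul_nonneg (inv_nonneg.2 (Real.sqrt_nonneg _)) (Real.sqrt_nonneg _)

lemma phaseDist_toIcoMod (θ : ℝ) (A B : Matrix κ κ ℂ) :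
    phaseDist (toIcoMod Real.two_pi_pos 0 θ) A B = phaseDist θ A B := by
  rw [phaseDist, phaseDist, toIcoMod, Complex.ofReal_sub, sub_mul, Complex.exp_sub,
    Complex.ofReal_zsmul, zsmul_eq_mul, Complex.ofReal_mul, Complex.ofReal_ofNat, mul_assoc,
    Complex.exp_int_mul_two_pi_mul_I, div_one]

lemma phaseDist_smul {c : ℂ} (hc : ‖c‖ = 1) (θ : ℝ) (A B : Matrix κ κ ℂ) :
    phaseDist θ (c • A) B = phaseDist (θ + c.arg) A B := by
  have hc' : Complex.exp (c.arg * Complex.I) = c := by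
    simpa [hc] using Complex.norm_mul_exp_arg_mul_I c
  rw [phaseDist, phaseDist, smul_smul, Complex.ofReal_add, add_mul, Complex.exp_add, hc']

lemma uDist_eq (A B : Matrix κ κ ℂ) :
    uDist A B = sInf ((phaseDist · A B) '' Set.Ico 0 (2 * Real.pi)) := rfl

lemma uDist_le_phaseDist (θ : ℝ) (A B : Matrix κ κ ℂ) : uDist A B ≤ phaseDist θ A B := by
  rw [uDist_eq, ← phaseDist_toIcoMod]
  refine csInf_le ⟨0, ?_⟩ (Set.mem_image_of_mem _ ?_)
  · rintro _ ⟨θ, -, rfl⟩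
    exact phaseDist_nonneg θ A B
  · simpa using toIcoMod_mem_Ico Real.two_pi_pos 0 θ

lemma le_uDist {r : ℝ} {A B : Matrix κ κ ℂ} (h : ∀ θ, r ≤ phaseDist θ A B) : r ≤ uDist A B :=
  le_csInf ((Set.nonempty_Ico.2 Real.two_pi_pos).image _) (by rintro _ ⟨θ, -, rfl⟩; exact h θ)

lemma uDist_smul {c : ℂ} (hc : ‖c‖ = 1) (A B : Matrix κ κ ℂ) : uDist (c • A) B = uDist A B := by
  refine le_antisymm (le_uDist fun θ => ?_) (le_uDist fun θ => ?_)
  · simpa [phaseDist_smul hc] using uDist_le_phaseDist (θ - c.arg) (c • A) B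
  · exact (uDist_le_phaseDist (θ + c.arg) A B).trans_eq (phaseDist_smul hc θ A B).symm

lemma uDistSet_le_uDist {A B : Matrix κ κ ℂ} {S : Set (Matrix κ κ ℂ)} (hB : B ∈ S) :
    uDistSet A S ≤ uDist A B :=
  csInf_le ⟨0, by rintro _ ⟨C, -, rfl⟩; exact le_uDist fun θ => phaseDist_nonneg θ A C⟩
    (Set.mem_image_of_mem _ hB)

lemma le_uDistSet {r : ℝ} {A : Matrix κ κ ℂ} {S : Set (Matrix κ κ ℂ)} (hS : S.Nonempty)
    (h : ∀ B ∈ S, r ≤ uDist A B) : r ≤ uDistSet A S :=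
  le_csInf (hS.image _) (by rintro _ ⟨B, hB, rfl⟩; exact h B hB)

lemma uDistSet_smul {c : ℂ} (hc : ‖c‖ = 1) (A : Matrix κ κ ℂ) (S : Set (Matrix κ κ ℂ)) :
    uDistSet (c • A) S = uDistSet A S := by
  simp only [uDistSet, uDist_smul hc]

variable [DecidableEq κ] {U : Matrix κ κ ℂ}

lemma fnorm_unitary_mul (hU : U ∈ unitaryGroup κ ℂ) (A : Matrix κ κ ℂ) :
    fnorm (U * A) = fnorm A := by
  have hU' : Uᴴ * U = 1 := mem_unitaryGroup_iff'.mp hU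
  rw [fnorm, conjTranspose_mul, Matrix.mul_assoc, ← Matrix.mul_assoc Uᴴ, hU', Matrix.one_mul,
    fnorm]

lemma fnorm_mul_unitary (hU : U ∈ unitaryGroup κ ℂ) (A : Matrix κ κ ℂ) :
    fnorm (A * U) = fnorm A := by
  have hU' : U * Uᴴ = 1 := mem_unitaryGroup_iff.mp hU
  rw [fnorm, conjTranspose_mul, Matrix.mul_assoc, trace_mul_comm, Matrix.mul_assoc,
    Matrix.mul_assoc, hU', Matrix.mul_one, fnorm]

lemma phaseDist_mul_le {A₁ A₂ B₁ B₂ : Matrix κ κ ℂ} (hA₁ : A₁ ∈ unitaryGroup κ ℂ)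
    (hB₂ : B₂ ∈ unitaryGroup κ ℂ) (θ₁ θ₂ : ℝ) :
    phaseDist (θ₁ + θ₂) (A₁ * A₂) (B₁ * B₂) ≤ phaseDist θ₁ A₁ B₁ + phaseDist θ₂ A₂ B₂ := by
  set c₁ := Complex.exp (θ₁ * Complex.I)
  set c₂ := Complex.exp (θ₂ * Complex.I)
  have hsplit : Complex.exp ((θ₁ + θ₂ : ℝ) * Complex.I) • (A₁ * A₂) - B₁ * B₂ =
      A₁ * (c₁ • (c₂ • A₂ - B₂)) + (c₁ • A₁ - B₁) * B₂ := by
    rw [Complex.ofReal_add, add_mul, Complex.exp_add, mul_smul, smul_sub, Matrix.mul_sub,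
      Matrix.mul_smul, Matrix.mul_smul, Matrix.sub_mul, Matrix.smul_mul, mul_smul_comm]
    abel
  have key : fnorm (A₁ * (c₁ • (c₂ • A₂ - B₂)) + (c₁ • A₁ - B₁) * B₂) ≤
      fnorm (c₁ • A₁ - B₁) + fnorm (c₂ • A₂ - B₂) := by
    refine (fnorm_add_le _ _).trans_eq ?_
    rw [fnorm_unitary_mul hA₁, fnorm_smul, Complex.norm_exp_ofReal_mul_I, one_mul,
      fnorm_mul_unitary hB₂, add_comm]
  simp only [phaseDist, hsplit, ← mul_add]
  exact mul_le_mul_of_nonneg_left key (inv_nonneg.2 (Real.sqrt_nonneg _))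

lemma uDist_mul_le {A₁ A₂ B₁ B₂ : Matrix κ κ ℂ} (hA₁ : A₁ ∈ unitaryGroup κ ℂ)
    (hB₂ : B₂ ∈ unitaryGroup κ ℂ) :
    uDist (A₁ * A₂) (B₁ * B₂) ≤ uDist A₁ B₁ + uDist A₂ B₂ := by
  rw [← sub_le_iff_le_add]
  refine le_uDist fun θ₁ => ?_
  rw [sub_le_iff_le_add', ← sub_le_iff_le_add]
  refine le_uDist fun θ₂ => ?_
  rw [sub_le_iff_le_add']
  exact (uDist_le_phaseDist _ _ _).trans (phaseDist_mul_le hA₁ hB₂ θ₁ θ₂)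

lemma uDistSet_mul_le {A₁ A₂ : Matrix κ κ ℂ} {S : Set (Matrix κ κ ℂ)} (hS : S.Nonempty)
    (hSU : S ⊆ unitaryGroup κ ℂ) (hSmul : ∀ B₁ ∈ S, ∀ B₂ ∈ S, B₁ * B₂ ∈ S)
    (hA₁ : A₁ ∈ unitaryGroup κ ℂ) :
    uDistSet (A₁ * A₂) S ≤ uDistSet A₁ S + uDistSet A₂ S := by
  rw [← sub_le_iff_le_add]
  refine le_uDistSet hS fun B₁ hB₁ => ?_
  rw [sub_le_iff_le_add', ← sub_le_iff_le_add]
  refine le_uDistSet hS fun B₂ hB₂ => ?_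
  rw [sub_le_iff_le_add']
  exact (uDistSet_le_uDist (hSmul B₁ hB₁ B₂ hB₂)).trans (uDist_mul_le hA₁ (hSU hB₂))

end Distance

lemma I_pow_smul_pauli_mem_pauliGroup {n : ℕ} (m : ℕ) (x : Fin n → Fin 4) :
    Complex.I ^ m • pauli x ∈ PauliGroup n :=
  ⟨⟨m % 4, Nat.mod_lt m four_pos⟩, x, by rw [← Complex.I_pow_eq_pow_mod]⟩

lemma mul_mem_pauliGroup {n : ℕ} {P Q : Matrix (Fin n → Fin 2) (Fin n → Fin 2) ℂ}
    (hP : P ∈ PauliGroup n) (hQ : Q ∈ PauliGroup n) : P * Q ∈ PauliGroup n := by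
  obtain ⟨k, x, rfl⟩ := hP
  obtain ⟨l, y, rfl⟩ := hQ
  rw [smul_mul_smul_comm, pauli_mul, smul_smul, ← pow_add, ← pow_add]
  exact I_pow_smul_pauli_mem_pauliGroup _ _

lemma pauliGroup_subset_unitaryGroup (n : ℕ) :
    PauliGroup n ⊆ unitaryGroup (Fin n → Fin 2) ℂ := by
  rintro _ ⟨k, x, rfl⟩
  refine Unitary.smul_mem_of_mem (pow_mem ?_ _) (pauli_mem_unitaryGroup x)
  simp [Unitary.mem_iff, Complex.conj_I]

lemma exists_mem_and_mem_of_injective {α : Type*} [Finite α] {f : α → α}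
    (hf : f.Injective) {s : Set α} (hs : Nat.card α < 2 * s.ncard) : ∃ x ∈ s, f x ∈ s := by
  have hinter : 0 < (s ∩ f '' s).ncard := by
    have := Set.ncard_inter_add_ncard_union s (f '' s)
    have := Set.ncard_le_card (s ∪ f '' s)
    rw [Set.ncard_image_of_injective s hf] at *
    omega
  obtain ⟨_, hfx, x, hx, rfl⟩ := Set.nonempty_of_ncard_ne_zero hinter.ne'
  exact ⟨x, hx, hfx⟩

theorem pauli_conjugate_good_fraction_general {n : ℕ} {δ : ℝ}
    (U : Matrix (Fin n → Fin 2) (Fin n → Fin 2) ℂ)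
    (hU : U ∈ Matrix.unitaryGroup (Fin n → Fin 2) ℂ)
    (hfrac : (2 : ℝ) / 3 * 4 ^ n ≤
      ({x : Fin n → Fin 4 | uDistSet (U * pauli x * Uᴴ) (PauliGroup n) ≤ δ}.ncard : ℝ)) :
    ∀ y : Fin n → Fin 4, uDistSet (U * pauli y * Uᴴ) (PauliGroup n) ≤ 2 * δ := by
  intro y
  set good := {x : Fin n → Fin 4 | uDistSet (U * pauli x * Uᴴ) (PauliGroup n) ≤ δ}
  have hdense : Nat.card (Fin n → Fin 4) < 2 * good.ncard := by
    have : (0 : ℝ) < 4 ^ n := by positivity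
    simp only [Nat.card_eq_fintype_card, Fintype.card_pi, Fintype.card_fin,
      Finset.prod_const, Finset.card_univ]
    exact_mod_cast (by linarith : (4 : ℝ) ^ n < 2 * good.ncard)
  obtain ⟨x, hx, hz⟩ := exists_mem_and_mem_of_injective
    (f := fun x k => y k ^^^ x k)
    (Function.Involutive.injective fun x => funext fun k => fin4_xor_xor_cancel_left _ _) hdense
  set z := fun k => y k ^^^ x k
  set conj := Unitary.conjStarAlgAut ℂ _ ⟨U, hU⟩
  have hprod : conj (pauli z) * conj (pauli x) =
      Complex.I ^ (∑ k, sigmaPhase (z k) (x k)) • conj (pauli y) := by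
    rw [← map_mul, pauli_mul, map_smul]
    congr 3
    exact funext fun k => fin4_xor_xor_cancel_right _ _
  have hconj (w : Fin n → Fin 4) : conj (pauli w) ∈ unitaryGroup (Fin n → Fin 2) ℂ :=
    mul_mem (mul_mem hU (pauli_mem_unitaryGroup w)) (Unitary.star_mem hU)
  calc uDistSet (U * pauli y * Uᴴ) (PauliGroup n)
      = uDistSet (conj (pauli z) * conj (pauli x)) (PauliGroup n) := by
        rw [hprod, uDistSet_smul (by simp)]; rfl
    _ ≤ uDistSet (conj (pauli z)) (PauliGroup n) + uDistSet (conj (pauli x)) (PauliGroup n) :=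
        uDistSet_mul_le ⟨_, I_pow_smul_pauli_mem_pauliGroup 0 0⟩
          (pauliGroup_subset_unitaryGroup n) (fun _ hP _ hQ => mul_mem_pauliGroup hP hQ)
          (hconj z)
    _ ≤ δ + δ := add_le_add hz hx
    _ = 2 * δ := (two_mul δ).symm

/-- If at least a 2/3 fraction of x ∈ Z₄ⁿ satisfy
D(Uσ_xU†, P_n) ≤ δ, then every y satisfies D(Uσ_yU†, P_n) ≤ 2δ. -/
theorem pauli_conjugate_good_fraction {n : ℕ} {δ : ℝ} (hδ : 0 ≤ δ)
    (U : Matrix (Fin n → Fin 2) (Fin n → Fin 2) ℂ)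
    (hU : U ∈ Matrix.unitaryGroup (Fin n → Fin 2) ℂ)
    (hfrac : (2 : ℝ) / 3 * 4 ^ n ≤
      ({x : Fin n → Fin 4 | uDistSet (U * pauli x * Uᴴ) (PauliGroup n) ≤ δ}.ncard : ℝ)) :
    ∀ y : Fin n → Fin 4, uDistSet (U * pauli y * Uᴴ) (PauliGroup n) ≤ 2 * δ :=
  pauli_conjugate_good_fraction_general U hU hfrac
end

section
/- For any two distinct permutations τ₁, τ₂ of {1,…,n}, viewed as 2ⁿ×2ⁿ unitaries permuting qubits via τ|i₁,…,i_n⟩ = |i_{τ(1)},…,i_{τ(n)}⟩, one has tr(τ₁†τ₂) = 2^l where l is the number of cycles of τ₁⁻¹τ₂; in particular tr(τ₁†τ₂) ≤ 2ⁿ/2, so the phase-optimized distance satisfies D(τ₁,τ₂)² ≥ 1/2. -/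
open Matrix

open scoped Classical in
/-- The unitary on (ℂ²)^{⊗n} induced by a permutation of the n qubits:
τ|i₁,…,i_n⟩ = |i_{τ(1)},…,i_{τ(n)}⟩. -/
noncomputable def permMatrix {n : ℕ} (τ : Equiv.Perm (Fin n)) :
    Matrix (Fin n → Fin 2) (Fin n → Fin 2) ℂ :=
  fun a b => if ∀ k, a k = b (τ k) then 1 else 0

/-!
Both matrices are permutation matrices of the basis `{0,1}ⁿ`, so `tr(τ₁†τ₂)` is the number of
basis words `w` with `w ∘ σ = w`, where `σ = τ₁⁻¹τ₂`. Such words are exactly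
the functions constant on the cycles of `σ` (fixed points counted as cycles of length one), so
there are `2^l` of them. As `σ ≠ 1` has a cycle of length at least two, `l ≤ n - 1`. Finally, for
unitaries `A`, `B` and `|c| = 1`, `‖cA - B‖² = 2N - 2 Re(c̄ tr(A†B)) ≥ 2N - 2 |tr(A†B)|`, which is
at least `N` once `|tr(A†B)| ≤ N/2`.
-/

open Finset

namespace Equiv.Perm

theorem invariant_iff_forall_sameCycle {α β : Type*} [Finite α] {σ : Perm α} (f : α → β) :
    (∀ x, f (σ x) = f x) ↔ ∀ x y, σ.SameCycle x y → f x = f y := by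
  refine ⟨fun h x y hxy => ?_, fun h x => (h x (σ x) (sameCycle_apply_right.2 .rfl)).symm⟩
  obtain ⟨i, rfl⟩ := hxy.exists_nat_pow_eq
  rw [coe_pow]
  exact (congrFun (Function.iterate_invariant (funext h) i) x).symm

section CycleLabel

variable {α : Type*} [Fintype α] [DecidableEq α] (σ : Perm α)

/-- The cycle through `x`; `cycleFactorsFinset` omits fixed points, so a fixed point labels its own
one-element cycle. -/
def cycleLabel (x : α) : σ.cycleFactorsFinset ⊕ Function.fixedPoints σ :=
  if h : σ x = x then .inr ⟨x, h⟩
  else .inl ⟨σ.cycleOf x, cycleOf_mem_cycleFactorsFinset_iff.2 (mem_support.2 h)⟩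

variable {σ}

theorem cycleLabel_eq_cycleLabel_iff {x y : α} :
    σ.cycleLabel x = σ.cycleLabel y ↔ σ.SameCycle x y := by
  by_cases hx : σ x = x <;> by_cases hy : σ y = y <;>
    simp only [cycleLabel, hx, hy, ↓reduceDIte, Sum.inl.injEq, Sum.inr.injEq, Subtype.mk.injEq,
      reduceCtorEq, false_iff]
  · exact Subtype.mk_eq_mk.trans ⟨fun h => h ▸ SameCycle.rfl, fun h => h.eq_of_left hx⟩
  · exact fun h => hy (h.apply_eq_self_iff.1 hx)
  · exact fun h => hx (h.apply_eq_self_iff.2 hy)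
  · exact (sameCycle_iff_cycleOf_eq_of_mem_support (mem_support.2 hx) (mem_support.2 hy)).symm

theorem cycleLabel_surjective : Function.Surjective σ.cycleLabel := by
  rintro (⟨c, hc⟩ | ⟨x, hx⟩)
  · obtain ⟨x, hxc⟩ := (mem_cycleFactorsFinset_iff.1 hc).1.nonempty_support
    have hx : σ x ≠ x := mem_support.1 (mem_cycleFactorsFinset_support_le hc hxc)
    exact ⟨x, by simp [cycleLabel, hx, ← cycle_is_cycleOf hxc hc]⟩
  · exact ⟨x, by simp [cycleLabel, show σ x = x from hx]⟩

theorem card_cycleFactorsFinset_sum_fixedPoints :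
    Nat.card (σ.cycleFactorsFinset ⊕ Function.fixedPoints σ) =
      σ.cycleType.card + #{x | σ x = x} := by
  rw [Nat.card_sum, Nat.card_eq_fintype_card, Fintype.card_coe, cycleType_def,
    Multiset.card_map, Nat.card_coe_set_eq, Set.ncard_eq_toFinset_card']
  congr 2
  ext x
  simp [Function.IsFixedPt]

theorem card_cycleType_add_card_fixedPoints_lt (h : σ ≠ 1) :
    σ.cycleType.card + #{x | σ x = x} < Fintype.card α := by
  have hsplit : #{x | σ x = x} + #σ.support = Fintype.card α := by
    rw [support, Finset.card_filter_add_card_filter_not]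
    rfl
  have hpos := card_cycleType_pos.2 h
  have hsum : σ.cycleType.card • 2 ≤ σ.cycleType.sum :=
    Multiset.card_nsmul_le_sum fun _ hx => two_le_of_mem_cycleType hx
  rw [sum_cycleType, smul_eq_mul] at hsum
  omega

end CycleLabel

def permuteArgs {α : Type*} (β : Type*) : Perm α →* Perm (α → β) where
  toFun σ := σ.arrowCongr (Equiv.refl β)
  map_one' := rfl
  map_mul' _ _ := rfl

@[simp]
theorem permuteArgs_apply {α β : Type*} (σ : Perm α) (f : α → β) :
    permuteArgs β σ f = f ∘ ⇑σ⁻¹ :=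
  rfl

theorem mem_fixedPoints_permuteArgs {α β : Type*} {σ : Perm α} {f : α → β} :
    f ∈ Function.fixedPoints (permuteArgs β σ) ↔ ∀ x, f (σ x) = f x := by
  rw [Function.mem_fixedPoints, Function.IsFixedPt, funext_iff]
  exact σ.symm.forall_congr fun {x} => by simp [eq_comm]

theorem card_fixedPoints_permuteArgs {α : Type*} [Fintype α] [DecidableEq α] (β : Type*)
    [Finite β] (σ : Perm α) :
    Nat.card (Function.fixedPoints (permuteArgs β σ)) =
      Nat.card β ^ (σ.cycleType.card + #{x | σ x = x}) := by
  have e : Function.fixedPoints (permuteArgs β σ) ≃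
      {f : α → β // Setoid.ker σ.cycleLabel ≤ Setoid.ker f} :=
    Equiv.subtypeEquivRight fun f => by
      rw [mem_fixedPoints_permuteArgs, invariant_iff_forall_sameCycle]
      simp only [Setoid.le_def, Setoid.ker_def, cycleLabel_eq_cycleLabel_iff]
  rw [Nat.card_congr (e.trans ((Setoid.liftEquiv _).trans
      ((Setoid.quotientKerEquivOfSurjective _ cycleLabel_surjective).arrowCongr (.refl β)))),
    Nat.card_fun, card_cycleFactorsFinset_sum_fixedPoints]

end Equiv.Perm

namespace Matrix

theorem conjTranspose_permMatrix_mul_self {n R : Type*} [Fintype n] [DecidableEq n]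
    [NonAssocSemiring R] [StarRing R] (σ : Equiv.Perm n) :
    (σ.permMatrix R)ᴴ * σ.permMatrix R = 1 := by
  rw [conjTranspose_permMatrix, ← permMatrix_mul, mul_inv_cancel, permMatrix_one]

theorem trace_conjTranspose_permMatrix_mul_permMatrix {n R : Type*} [Fintype n] [DecidableEq n]
    [CommRing R] [StarRing R] (σ τ : Equiv.Perm n) :
    trace ((σ.permMatrix R)ᴴ * τ.permMatrix R) = (Function.fixedPoints (σ⁻¹ * τ)).ncard := by
  rw [conjTranspose_permMatrix, trace_mul_comm, ← permMatrix_mul, trace_permutation]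

variable {ι : Type*} [Fintype ι] [DecidableEq ι] {A B : Matrix ι ι ℂ}

theorem card_sub_le_re_trace_smul_sub (hA : Aᴴ * A = 1) (hB : Bᴴ * B = 1) {c : ℂ}
    (hc : ‖c‖ = 1) :
    2 * Fintype.card ι - 2 * ‖trace (Aᴴ * B)‖ ≤ (trace ((c • A - B)ᴴ * (c • A - B))).re := by
  have hexpand : trace ((c • A - B)ᴴ * (c • A - B)) =
      (star c * c) * Fintype.card ι - star c * trace (Aᴴ * B) -
        c * trace (Bᴴ * A) + Fintype.card ι := by
    simp only [conjTranspose_sub, conjTranspose_smul, sub_mul, mul_sub, smul_mul_assoc,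
      mul_smul_comm, trace_sub, trace_smul, smul_eq_mul, hA, hB, trace_one]
    ring
  have hswap : trace (Bᴴ * A) = star (trace (Aᴴ * B)) := by
    rw [← trace_conjTranspose, conjTranspose_mul, conjTranspose_conjTranspose]
  have hcc : star c * c = 1 := by
    rw [RCLike.star_def, RCLike.conj_mul, hc]
    simp
  have h1 : (star c * trace (Aᴴ * B)).re ≤ ‖trace (Aᴴ * B)‖ := by
    simpa [hc] using Complex.re_le_norm (star c * trace (Aᴴ * B))
  have h2 : (c * star (trace (Aᴴ * B))).re ≤ ‖trace (Aᴴ * B)‖ := by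
    simpa [hc] using Complex.re_le_norm (c * star (trace (Aᴴ * B)))
  rw [hexpand, hcc, hswap]
  simp only [Complex.add_re, Complex.sub_re, one_mul, Complex.natCast_re]
  linarith

theorem one_half_le_uDist_sq [Nonempty ι] (hA : Aᴴ * A = 1) (hB : Bᴴ * B = 1)
    (h : 2 * ‖trace (Aᴴ * B)‖ ≤ Fintype.card ι) : 1 / 2 ≤ uDist A B ^ 2 := by
  have hbound : ∀ θ : ℝ, (Real.sqrt 2)⁻¹ ≤
      (Real.sqrt (2 * Fintype.card ι))⁻¹ * fnorm (Complex.exp (θ * Complex.I) • A - B) := by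
    intro θ
    have hc : ‖Complex.exp (θ * Complex.I)‖ = 1 := Complex.norm_exp_ofReal_mul_I θ
    have hfnorm : Real.sqrt (Fintype.card ι) ≤ fnorm (Complex.exp (θ * Complex.I) • A - B) :=
      Real.sqrt_le_sqrt (by linarith [card_sub_le_re_trace_smul_sub hA hB hc])
    rw [Real.sqrt_mul zero_le_two, mul_inv, mul_assoc]
    refine le_mul_of_one_le_right (by positivity) ?_
    rwa [one_le_inv_mul₀ (by positivity)]
  have hud : (Real.sqrt 2)⁻¹ ≤ uDist A B :=
    le_csInf ⟨_, 0, ⟨le_rfl, by positivity⟩, rfl⟩ (by rintro _ ⟨θ, -, rfl⟩; exact hbound θ)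
  calc (1 : ℝ) / 2 = (Real.sqrt 2)⁻¹ ^ 2 := by rw [inv_pow, Real.sq_sqrt zero_le_two, one_div]
    _ ≤ uDist A B ^ 2 := pow_le_pow_left₀ (by positivity) hud 2

end Matrix

theorem permMatrix_eq_permMatrix_permuteArgs {n : ℕ} (τ : Equiv.Perm (Fin n)) :
    permMatrix τ = (Equiv.Perm.permuteArgs (Fin 2) τ).permMatrix ℂ := by
  ext a b
  simp only [permMatrix, PEquiv.toMatrix_apply, Equiv.toPEquiv_apply, Option.mem_def,
    Option.some.injEq, Equiv.Perm.permuteArgs_apply, funext_iff]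
  exact if_congr (τ.forall_congr fun {k} => by simp) rfl rfl

open scoped Classical in
theorem perm_matrix_trace_general {n : ℕ}
    (τ₁ τ₂ : Equiv.Perm (Fin n)) (hne : τ₁ ≠ τ₂) :
    Matrix.trace ((permMatrix τ₁)ᴴ * permMatrix τ₂) =
        (2 : ℂ) ^ ((τ₁⁻¹ * τ₂).cycleType.card +
          (Finset.univ.filter fun i => (τ₁⁻¹ * τ₂) i = i).card) ∧
      (2 : ℝ) ^ ((τ₁⁻¹ * τ₂).cycleType.card +
          (Finset.univ.filter fun i => (τ₁⁻¹ * τ₂) i = i).card) ≤ 2 ^ n / 2 ∧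
      1 / 2 ≤ uDist (permMatrix τ₁) (permMatrix τ₂) ^ 2 := by
  have htrace : trace ((permMatrix τ₁)ᴴ * permMatrix τ₂) =
      (2 : ℂ) ^ ((τ₁⁻¹ * τ₂).cycleType.card + #{i | (τ₁⁻¹ * τ₂) i = i}) := by
    rw [permMatrix_eq_permMatrix_permuteArgs, permMatrix_eq_permMatrix_permuteArgs,
      trace_conjTranspose_permMatrix_mul_permMatrix, ← map_inv, ← map_mul, ← Nat.card_coe_set_eq,
      Equiv.Perm.card_fixedPoints_permuteArgs]
    simp
  have hlt := Equiv.Perm.card_cycleType_add_card_fixedPoints_lt (σ := τ₁⁻¹ * τ₂)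
    (by rwa [Ne, inv_mul_eq_one])
  have hbound : (2 : ℝ) ^ ((τ₁⁻¹ * τ₂).cycleType.card + #{i | (τ₁⁻¹ * τ₂) i = i}) ≤ 2 ^ n / 2 := by
    rw [le_div_iff₀ two_pos, ← pow_succ]
    exact pow_le_pow_right₀ one_le_two (by simpa using hlt)
  refine ⟨htrace, hbound, ?_⟩
  simp only [permMatrix_eq_permMatrix_permuteArgs] at htrace ⊢
  refine one_half_le_uDist_sq (conjTranspose_permMatrix_mul_self _)
    (conjTranspose_permMatrix_mul_self _) ?_
  rw [htrace, norm_pow, Complex.norm_two, Fintype.card_fun, Fintype.card_fin, Fintype.card_fin,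
    Nat.cast_pow, Nat.cast_ofNat]
  linarith

open scoped Classical in
/-- For distinct permutations τ₁ ≠ τ₂ of the n qubits,
tr(τ₁†τ₂) = 2^l where l is the number of cycles (including fixed points) of τ₁⁻¹τ₂;
in particular tr(τ₁†τ₂) ≤ 2ⁿ/2 and D(τ₁,τ₂)² ≥ 1/2. -/
theorem perm_matrix_trace {n : ℕ} (hn : 2 ≤ n)
    (τ₁ τ₂ : Equiv.Perm (Fin n)) (hne : τ₁ ≠ τ₂) :
    Matrix.trace ((permMatrix τ₁)ᴴ * permMatrix τ₂) =
        (2 : ℂ) ^ ((τ₁⁻¹ * τ₂).cycleType.card +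
          (Finset.univ.filter fun i => (τ₁⁻¹ * τ₂) i = i).card) ∧
      (2 : ℝ) ^ ((τ₁⁻¹ * τ₂).cycleType.card +
          (Finset.univ.filter fun i => (τ₁⁻¹ * τ₂) i = i).card) ≤ 2 ^ n / 2 ∧
      1 / 2 ≤ uDist (permMatrix τ₁) (permMatrix τ₂) ^ 2 :=
  perm_matrix_trace_general τ₁ τ₂ hne
end
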